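/- arXiv:1009.0185 — 3 statements merged into one kernel-verified Lean document; each statement's English description precedes it below -/
import Mathlib

section
/- For every m ≥ 1, the number of normal DD-words of degree m in an alphabet X of size n is f(m)·n^m, where f(m) are the Catalan numbers defined by f(0) = 1 and f(m) = ∑_{i=0}^{m−1} f(i) f(m−1−i). Equivalently, the dimension over k of the degree-m homogeneous component of the free dendriform algebra DD(X) with |X| = n is (2m)!·n^m / ((m+1)!·m!). -/
/-- Normal `DD`-words over an alphabet `X`: either a letter `x`,
or `x ≺ v`, or `x ≻ v`, or `(x ≻ u₁) ≻ u₂`, with `x` a letter and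
`v, u₁, u₂` normal `DD`-words. -/
inductive DDWord (X : Type) where
  | ltr : X → DDWord X
  | precW : X → DDWord X → DDWord X
  | succW : X → DDWord X → DDWord X
  | succ2 : X → DDWord X → DDWord X → DDWord X

/-- The degree of a normal `DD`-word: the number of letter occurrences. -/
def DDWord.deg {X : Type} : DDWord X → ℕ
  | .ltr _ => 1
  | .precW _ v => 1 + v.deg
  | .succW _ v => 1 + v.deg
  | .succ2 _ u v => 1 + u.deg + v.deg

/-!
Sending `x`, `x ≺ v`, `x ≻ v` and `(x ≻ u) ≻ v` to the binary tree with root label `x` and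
(left, right) subtrees `(∅, ∅)`, `(v, ∅)`, `(∅, v)` and `(u, v)` is a bijection from normal
`DD`-words onto nonempty `X`-labelled binary trees, taking degree to number of nodes. Splitting a
tree at its root shows that the number of `X`-labelled trees with `m` nodes satisfies the Catalan
recursion with an extra factor `|X|` per node, so it is `catalan m * |X| ^ m`.
-/

namespace BinaryTree

variable {X : Type*}

theorem numNodes_eq_zero_iff {t : BinaryTree X} : t.numNodes = 0 ↔ t = nil := by
  cases t <;> simp [numNodes]

instance uniqueNumNodesEqZero : Unique {t : BinaryTree X // t.numNodes = 0} where
  default := ⟨nil, rfl⟩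
  uniq t := Subtype.ext (numNodes_eq_zero_iff.mp t.2)

def numNodesSuccEquiv (m : ℕ) :
    {t : BinaryTree X // t.numNodes = m + 1} ≃
      X × Σ i : Fin (m + 1),
        {t : BinaryTree X // t.numNodes = i} × {t : BinaryTree X // t.numNodes = m - i} where
  toFun
    | ⟨node x l r, h⟩ =>
      (x, ⟨⟨l.numNodes, by simp only [numNodes] at h; omega⟩, ⟨l, rfl⟩,
        ⟨r, show r.numNodes = m - l.numNodes by simp only [numNodes] at h; omega⟩⟩)
  invFun
    | (x, ⟨i, l, r⟩) => ⟨node x l r, by simp only [numNodes, l.2, r.2]; omega⟩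
  left_inv
    | ⟨node x l r, h⟩ => rfl
  right_inv := by
    rintro ⟨x, ⟨i, hi⟩, ⟨l, hl : l.numNodes = i⟩, r⟩
    subst hl
    rfl

instance finite_numNodes_eq [Finite X] (m : ℕ) : Finite {t : BinaryTree X // t.numNodes = m} := by
  induction m using Nat.strong_induction_on with
  | _ m ih =>
    cases m with
    | zero => infer_instance
    | succ m =>
      have (i : Fin (m + 1)) : Finite ({t : BinaryTree X // t.numNodes = i} ×
          {t : BinaryTree X // t.numNodes = m - i}) :=
        have := ih i (by omega); have := ih (m - i) (by omega); inferInstance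
      exact Finite.of_equiv _ (numNodesSuccEquiv m).symm

theorem card_numNodes_eq [Finite X] (m : ℕ) :
    Nat.card {t : BinaryTree X // t.numNodes = m} = catalan m * Nat.card X ^ m := by
  induction m using Nat.strong_induction_on with
  | _ m ih =>
    cases m with
    | zero => simp
    | succ m =>
      rw [Nat.card_congr (numNodesSuccEquiv m), Nat.card_prod, Nat.card_sigma, catalan_succ,
        Finset.sum_mul, Finset.mul_sum]
      refine Finset.sum_congr rfl fun i _ => ?_
      rw [Nat.card_prod, ih i (by omega), ih (m - i) (by omega)]
      obtain ⟨i, hi⟩ := i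
      obtain ⟨k, rfl⟩ := Nat.exists_eq_add_of_le (Nat.le_of_lt_succ hi)
      simp only [Nat.add_sub_cancel_left]
      ring

end BinaryTree

namespace DDWord

open BinaryTree

variable {X : Type}

def toTree : DDWord X → BinaryTree X
  | ltr x => node x nil nil
  | precW x v => node x v.toTree nil
  | succW x v => node x nil v.toTree
  | succ2 x u v => node x u.toTree v.toTree

theorem toTree_ne_nil (w : DDWord X) : w.toTree ≠ nil := by
  cases w <;> simp [toTree]

theorem numNodes_toTree (w : DDWord X) : w.toTree.numNodes = w.deg := by
  induction w <;> simp only [toTree, numNodes, deg, *] <;> omega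

theorem toTree_injective : Function.Injective (toTree : DDWord X → BinaryTree X) := by
  intro w
  induction w <;> intro w' h <;> cases w' <;> simp only [toTree, node.injEq] at h <;>
    grind [toTree_ne_nil]

theorem exists_toTree_eq {t : BinaryTree X} (ht : t ≠ nil) : ∃ w : DDWord X, w.toTree = t := by
  induction t with
  | nil => exact absurd rfl ht
  | node x l r ihl ihr =>
    rcases eq_or_ne l nil with rfl | hl <;> rcases eq_or_ne r nil with rfl | hr
    · exact ⟨ltr x, rfl⟩
    · obtain ⟨v, rfl⟩ := ihr hr
      exact ⟨succW x v, rfl⟩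
    · obtain ⟨u, rfl⟩ := ihl hl
      exact ⟨precW x u, rfl⟩
    · obtain ⟨u, rfl⟩ := ihl hl
      obtain ⟨v, rfl⟩ := ihr hr
      exact ⟨succ2 x u v, rfl⟩

noncomputable def degEquivNumNodes {m : ℕ} (hm : m ≠ 0) :
    {w : DDWord X // w.deg = m} ≃ {t : BinaryTree X // t.numNodes = m} :=
  Equiv.ofBijective (fun w => ⟨w.1.toTree, (numNodes_toTree w.1).trans w.2⟩) <| by
    refine ⟨fun w w' h => Subtype.ext (toTree_injective (congrArg Subtype.val h)), ?_⟩
    rintro ⟨t, ht⟩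
    obtain ⟨w, rfl⟩ := exists_toTree_eq fun h => hm (ht ▸ numNodes_eq_zero_iff.mpr h)
    exact ⟨⟨w, (numNodes_toTree w).symm.trans ht⟩, rfl⟩

theorem card_deg_eq [Finite X] {m : ℕ} (hm : m ≠ 0) :
    Nat.card {w : DDWord X // w.deg = m} = catalan m * Nat.card X ^ m :=
  (Nat.card_congr (degEquivNumNodes hm)).trans (card_numNodes_eq m)

end DDWord

theorem eq_catalan_of_rec (f : ℕ → ℕ) (h0 : f 0 = 1)
    (hrec : ∀ j : ℕ, 1 ≤ j → f j = ∑ i ∈ Finset.range j, f i * f (j - 1 - i)) : f = catalan := by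
  funext m
  induction m using Nat.strong_induction_on with
  | _ m ih =>
    cases m with
    | zero => rw [h0, catalan_zero]
    | succ m =>
      rw [hrec (m + 1) m.succ_pos, catalan_succ, ← Fin.sum_univ_eq_sum_range]
      refine Finset.sum_congr rfl fun i _ => ?_
      rw [Nat.add_sub_cancel, ih i (by omega), ih (m - i) (by omega)]

theorem catalan_eq_factorial_div (m : ℕ) :
    catalan m = (2 * m).factorial / ((m + 1).factorial * m.factorial) := by
  rw [catalan_eq_centralBinom_div, Nat.centralBinom_eq_two_mul_choose,
    Nat.choose_eq_factorial_div_factorial (by omega), Nat.div_div_eq_div_mul,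
    show 2 * m - m = m by omega, Nat.factorial_succ, mul_right_comm, mul_comm m.factorial]

/-- For `m ≥ 1` the number of normal `DD`-words of degree `m` over an
`n`-letter alphabet is `f m * n^m`, where `f` satisfies the Catalan recursion;
equivalently it is `(2m)!/((m+1)!·m!) · n^m`, the dimension of the degree-`m`
component of the free dendriform algebra on `n` generators. -/
theorem card_normal_DDwords (n m : ℕ) (hm : 1 ≤ m) (f : ℕ → ℕ) (h0 : f 0 = 1)
    (hrec : ∀ j : ℕ, 1 ≤ j → f j = ∑ i ∈ Finset.range j, f i * f (j - 1 - i)) :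
    Nat.card {w : DDWord (Fin n) // w.deg = m} = f m * n ^ m ∧
    Nat.card {w : DDWord (Fin n) // w.deg = m}
      = (2 * m).factorial / ((m + 1).factorial * m.factorial) * n ^ m := by
  rw [DDWord.card_deg_eq (by omega), Nat.card_fin, eq_catalan_of_rec f h0 hrec,
    catalan_eq_factorial_div]
  exact ⟨rfl, rfl⟩
end

section
/- Let A(t) = (1 − 2nt − √(1 − 4nt))/2. Then A(t) satisfies the functional equation A(t) = n²t² + nt·(2A(t) + C(t)) where C(t) = nt·(nt + 2A(t) + C(t))², and moreover A(0) = 0. Equivalently, A(t) is the unique power series solution with zero constant term of the quadratic equation A² − (1 − 2nt)A + n²t² = 0 arising from eliminating C. -/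
/-!
Write `x = nt` and `a = A(t)`. The quadratic `a² − (1 − 2x)a + x² = 0`, i.e. `(x + a)² = a`, is the
quadratic formula for `a = (1 − 2x − √(1 − 4x))/2`. Taking `C = a²/x`, the first equation of the
system becomes `a = (x + a)²`, and then `x + 2a + C = (x + a)²/x = a/x`, so the second one reads
`C = x (a/x)² = a²/x`. At `x = 0` Lean's `a²/0 = 0` is harmless, since there `a = 0`.
-/

section Field

variable {K : Type*} [Field K]

theorem quadratic_eq_zero_of_sq_eq_one_sub_four_mul (h2 : (2 : K) ≠ 0) {x s : K}
    (hs : s ^ 2 = 1 - 4 * x) :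
    ((1 - 2 * x - s) / 2) ^ 2 - (1 - 2 * x) * ((1 - 2 * x - s) / 2) + x ^ 2 = 0 := by
  field_simp
  linear_combination hs

theorem dendriform_system_of_quadratic_eq_zero {x a : K}
    (hq : a ^ 2 - (1 - 2 * x) * a + x ^ 2 = 0) (ha : x = 0 → a = 0) :
    a = x ^ 2 + x * (2 * a + a ^ 2 / x) ∧ a ^ 2 / x = x * (x + 2 * a + a ^ 2 / x) ^ 2 := by
  rcases eq_or_ne x 0 with rfl | hx
  · simp [ha rfl]
  · have hsq : (x + a) ^ 2 = a := by linear_combination hq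
    have hsum : x + 2 * a + a ^ 2 / x = a / x := by
      field_simp
      linear_combination hsq
    refine ⟨?_, ?_⟩
    · field_simp
      linear_combination -hsq
    · rw [hsum]
      field_simp

end Field

theorem four_mul_mul_lt_one_of_abs_lt {n t : ℝ} (ht : |t| < 1 / (4 * n)) : 4 * n * t < 1 := by
  have h4n : 0 < 4 * n := one_div_pos.mp ((abs_nonneg t).trans_lt ht)
  linarith [(lt_div_iff₀ h4n).mp (lt_of_abs_lt ht)]

theorem dendriform_A_series_functional_equation_general (n : ℕ) (A : ℝ → ℝ)
    (hA : ∀ t : ℝ, A t = (1 - 2 * n * t - Real.sqrt (1 - 4 * n * t)) / 2) :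
    A 0 = 0 ∧
    (∀ t : ℝ, |t| < 1 / (4 * n) →
      (A t) ^ 2 - (1 - 2 * n * t) * A t + n ^ 2 * t ^ 2 = 0) ∧
    ∃ C : ℝ → ℝ, ∀ t : ℝ, |t| < 1 / (4 * n) →
      A t = n ^ 2 * t ^ 2 + n * t * (2 * A t + C t) ∧
      C t = n * t * (n * t + 2 * A t + C t) ^ 2 := by
  have hA0 : A 0 = 0 := by simp [hA]
  have hquad : ∀ t : ℝ, |t| < 1 / (4 * n) →
      (A t) ^ 2 - (1 - 2 * n * t) * A t + n ^ 2 * t ^ 2 = 0 := by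
    intro t ht
    have hs := Real.sq_sqrt (sub_nonneg.mpr (four_mul_mul_lt_one_of_abs_lt ht).le)
    rw [hA]
    linear_combination quadratic_eq_zero_of_sq_eq_one_sub_four_mul (x := n * t) two_ne_zero
      (by rw [hs]; ring)
  refine ⟨hA0, hquad, fun t => A t ^ 2 / (n * t), fun t ht => ?_⟩
  have hzero : (n : ℝ) * t = 0 → A t = 0 := by
    intro h
    rw [hA, mul_assoc, mul_assoc 4, h]
    simp
  obtain ⟨hfirst, hsecond⟩ :=
    dendriform_system_of_quadratic_eq_zero (by linear_combination hquad t ht) hzero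
  exact ⟨by linear_combination hfirst, by linear_combination hsecond⟩

/-- For `n ≥ 1`, the function `A(t) = (1 − 2nt − √(1 − 4nt))/2` vanishes at `0`,
satisfies the quadratic equation `A² − (1 − 2nt)A + n²t² = 0` obtained by eliminating
`C`, and together with some `C(t)` solves the system
`A = n²t² + nt(2A + C)`, `C = nt(nt + 2A + C)²` on `|t| < 1/(4n)`. -/
theorem dendriform_A_series_functional_equation (n : ℕ) (hn : 1 ≤ n) (A : ℝ → ℝ)
    (hA : ∀ t : ℝ, A t = (1 - 2 * n * t - Real.sqrt (1 - 4 * n * t)) / 2) :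
    A 0 = 0 ∧
    (∀ t : ℝ, |t| < 1 / (4 * n) →
      (A t) ^ 2 - (1 - 2 * n * t) * A t + n ^ 2 * t ^ 2 = 0) ∧
    ∃ C : ℝ → ℝ, ∀ t : ℝ, |t| < 1 / (4 * n) →
      A t = n ^ 2 * t ^ 2 + n * t * (2 * A t + C t) ∧
      C t = n * t * (n * t + 2 * A t + C t) ^ 2 :=
  dendriform_A_series_functional_equation_general n A hA
end

section
/- The unique formal power series A(t) ∈ ℚ[[t]] with zero constant term satisfying A² − (1 − 2nt)A + n²t² = 0 is A(t) = ∑_{m≥2} C_{m−1} n^m t^m, where C_j are the Catalan numbers; that is, the coefficient of t^m in A is C_{m−1}·n^m for m ≥ 2 and 0 for m ≤ 1. -/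
open PowerSeries

private noncomputable def gfun (n : ℕ) : ℕ → ℚ :=
  fun m => if m < 2 then 0 else (catalan (m - 1) : ℚ) * (n : ℚ) ^ m

private lemma catrec (k : ℕ) :
    catalan (k + 2) =
      (∑ j ∈ Finset.range k, catalan (j + 1) * catalan (k - j)) + 2 * catalan (k + 1) := by
  rw [show k + 2 = (k + 1) + 1 from rfl, catalan_succ',
    Finset.Nat.sum_antidiagonal_eq_sum_range_succ_mk]
  rw [Finset.sum_range_succ, Finset.sum_range_succ']
  simp [Nat.succ_sub_succ]
  ring

private lemma cat_cast (j : ℕ) :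
    (catalan j : ℚ) = ((2 * j).factorial : ℚ) / (((j + 1).factorial : ℚ) * (j.factorial : ℚ)) := by
  have h := succ_mul_catalan_eq_centralBinom j
  have hc : (j.centralBinom : ℚ) = ((2 * j).factorial : ℚ) / ((j.factorial : ℚ) * (j.factorial : ℚ)) := by
    rw [Nat.centralBinom, Nat.cast_choose ℚ (by omega : j ≤ 2 * j),
      show 2 * j - j = j from by omega]
  have h' : ((j : ℚ) + 1) * (catalan j : ℚ) = (j.centralBinom : ℚ) := by
    exact_mod_cast congrArg (Nat.cast : ℕ → ℚ) h
  rw [Nat.factorial_succ]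
  have hf : (j.factorial : ℚ) ≠ 0 := by exact_mod_cast j.factorial_ne_zero
  have hj1 : ((j : ℚ) + 1) ≠ 0 := by positivity
  rw [eq_div_iff (by push_cast; positivity)]
  rw [hc, eq_div_iff (by positivity)] at h'
  push_cast
  push_cast at h'
  linear_combination h'

private lemma gid (n : ℕ) (k : ℕ) :
    gfun n (k + 1) =
      (∑ p ∈ Finset.HasAntidiagonal.antidiagonal (k + 1), gfun n p.1 * gfun n p.2)
        + 2 * (n : ℚ) * gfun n k + (if k + 1 = 2 then (n : ℚ) ^ 2 else 0) := by
  rw [Finset.Nat.sum_antidiagonal_eq_sum_range_succ_mk]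
  match k with
  | 0 => simp [Finset.sum_range_succ, gfun]
  | 1 =>
    rw [Finset.sum_range_succ, Finset.sum_range_succ, Finset.sum_range_succ]
    norm_num [gfun]
  | (j + 2) =>
    have hsum : (∑ i ∈ Finset.range (j + 4), gfun n i * gfun n (j + 3 - i))
        = ∑ t ∈ Finset.range j, (catalan (t + 1) : ℚ) * (catalan (j - t) : ℚ) * (n : ℚ) ^ (j + 3) := by
      rw [Finset.sum_range_succ, Finset.sum_range_succ, Finset.sum_range_succ',
        Finset.sum_range_succ']
      have e1 : gfun n (j + 3) * gfun n (j + 3 - (j + 3)) = 0 := by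
        simp [gfun]
      have e2 : gfun n (j + 2) * gfun n (j + 3 - (j + 2)) = 0 := by
        have : j + 3 - (j + 2) = 1 := by omega
        rw [this]; simp [gfun]
      have e3 : gfun n 0 = 0 := by simp [gfun]
      have e4 : gfun n 1 = 0 := by simp [gfun]
      rw [e1, e2, e3, e4]
      simp only [zero_mul, add_zero, mul_zero]
      apply Finset.sum_congr rfl
      intro t ht
      have ht' : t < j := Finset.mem_range.mp ht
      have h1 : gfun n (t + 1 + 1) = (catalan (t + 1) : ℚ) * (n : ℚ) ^ (t + 2) := by
        simp [gfun]
      have h2 : j + 3 - (t + 1 + 1) = j + 1 - t := by omega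
      have h3 : gfun n (j + 1 - t) = (catalan (j - t) : ℚ) * (n : ℚ) ^ (j + 1 - t) := by
        have hlt : ¬ (j + 1 - t < 2) := by omega
        have : j + 1 - t - 1 = j - t := by omega
        simp [gfun, hlt, this]
      rw [h1, h2, h3]
      rw [show (n : ℚ) ^ (j + 3) = (n : ℚ) ^ (t + 2) * (n : ℚ) ^ (j + 1 - t) by
        rw [← pow_add]; congr 1; omega]
      ring
    rw [hsum]
    have hg1 : gfun n (j + 3) = (catalan (j + 2) : ℚ) * (n : ℚ) ^ (j + 3) := by simp [gfun]
    have hg2 : gfun n (j + 2) = (catalan (j + 1) : ℚ) * (n : ℚ) ^ (j + 2) := by simp [gfun]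
    rw [hg1, hg2, if_neg (by omega)]
    have := catrec j
    have hcast : (catalan (j + 2) : ℚ)
        = (∑ t ∈ Finset.range j, (catalan (t + 1) : ℚ) * (catalan (j - t) : ℚ))
          + 2 * (catalan (j + 1) : ℚ) := by exact_mod_cast congrArg (Nat.cast : ℕ → ℚ) this
    rw [hcast, add_mul, Finset.sum_mul]
    ring

private lemma coeff_eq (n : ℕ) (B : PowerSeries ℚ) (hB0 : PowerSeries.coeff (R := ℚ) 0 B = 0)
    (hBeq : B ^ 2 - (1 - 2 * (n : PowerSeries ℚ) * PowerSeries.X) * B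
        + (n : PowerSeries ℚ) ^ 2 * PowerSeries.X ^ 2 = 0) :
    ∀ m, PowerSeries.coeff (R := ℚ) m B = gfun n m := by
  have hB : B = B * B + ((2 * (n : ℚ)) • (PowerSeries.X * B)) + ((n : ℚ) ^ 2 • PowerSeries.X ^ 2) := by
    rw [PowerSeries.smul_eq_C_mul, PowerSeries.smul_eq_C_mul]
    have hn : (PowerSeries.C (R := ℚ)) ((n : ℚ)) = (n : PowerSeries ℚ) := by
      simp [PowerSeries.C_eq_algebraMap]
    have h2 : (PowerSeries.C (R := ℚ)) (2 * (n : ℚ)) = 2 * (n : PowerSeries ℚ) := by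
      rw [map_mul, hn, map_ofNat]
    have hn2 : (PowerSeries.C (R := ℚ)) ((n : ℚ) ^ 2) = (n : PowerSeries ℚ) ^ 2 := by
      rw [map_pow, hn]
    rw [h2, hn2]
    linear_combination -hBeq
  intro m
  induction m using Nat.strong_induction_on with
  | _ m ih =>
    match m with
    | 0 => simpa [gfun] using hB0
    | (k + 1) =>
      have key : PowerSeries.coeff (R := ℚ) (k + 1) B
          = (∑ p ∈ Finset.HasAntidiagonal.antidiagonal (k + 1),
              PowerSeries.coeff (R := ℚ) p.1 B * PowerSeries.coeff (R := ℚ) p.2 B)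
            + 2 * (n : ℚ) * PowerSeries.coeff (R := ℚ) k B
            + (if k + 1 = 2 then (n : ℚ) ^ 2 else 0) := by
        conv_lhs => rw [hB]
        rw [map_add, map_add, LinearMap.map_smul, LinearMap.map_smul,
          PowerSeries.coeff_mul, PowerSeries.coeff_succ_X_mul, PowerSeries.coeff_X_pow]
        by_cases h : k + 1 = 2 <;> simp [h, smul_eq_mul] <;> ring
      rw [key, gid n k]
      congr 1
      congr 1
      · apply Finset.sum_congr rfl
        intro p hp
        have hsum : p.1 + p.2 = k + 1 := Finset.HasAntidiagonal.mem_antidiagonal.mp hp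
        by_cases h1 : p.1 = 0
        · simp [h1, hB0, gfun]
        · by_cases h2 : p.2 = 0
          · simp [h2, hB0, gfun]
          · rw [ih p.1 (by omega), ih p.2 (by omega)]
      · rw [ih k (by omega)]

/-- For fixed `n ≥ 1`, a formal power series `A ∈ ℚ[[t]]` with zero constant term
satisfying `A² − (1 − 2nt)A + n²t² = 0` is unique, and its coefficients are
`[t⁰]A = 0`, `[t¹]A = 0`, and `[t^m]A = C_{m−1}·n^m` for `m ≥ 2` (in particular
`[t²]A = n²`), where `C_j = (2j)!/((j+1)!·j!)` are the Catalan numbers. -/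
theorem dendriform_A_power_series_coefficients (n : ℕ) (hn : 1 ≤ n)
    (A : PowerSeries ℚ) (hA0 : PowerSeries.coeff (R := ℚ) 0 A = 0)
    (hAeq : A ^ 2 - (1 - 2 * (n : PowerSeries ℚ) * PowerSeries.X) * A
        + (n : PowerSeries ℚ) ^ 2 * PowerSeries.X ^ 2 = 0) :
    (∀ B : PowerSeries ℚ, PowerSeries.coeff (R := ℚ) 0 B = 0 →
      B ^ 2 - (1 - 2 * (n : PowerSeries ℚ) * PowerSeries.X) * B
          + (n : PowerSeries ℚ) ^ 2 * PowerSeries.X ^ 2 = 0 → B = A) ∧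
    PowerSeries.coeff (R := ℚ) 1 A = 0 ∧
    PowerSeries.coeff (R := ℚ) 2 A = (n : ℚ) ^ 2 ∧
    (∀ m : ℕ, 2 ≤ m →
      PowerSeries.coeff (R := ℚ) m A
        = (((2 * (m - 1)).factorial : ℚ) / ((m.factorial : ℚ) * ((m - 1).factorial : ℚ)))
            * (n : ℚ) ^ m) := by
  have hcoeff := coeff_eq n A hA0 hAeq
  refine ⟨?_, ?_, ?_, ?_⟩
  · intro B hB0 hBeq
    ext m
    rw [coeff_eq n B hB0 hBeq m, hcoeff m]
  · rw [hcoeff 1]; simp [gfun]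
  · rw [hcoeff 2]; simp [gfun]
  · intro m hm
    obtain ⟨j, rfl⟩ : ∃ j, m = j + 2 := ⟨m - 2, by omega⟩
    rw [hcoeff (j + 2)]
    have : gfun n (j + 2) = (catalan (j + 1) : ℚ) * (n : ℚ) ^ (j + 2) := by simp [gfun]
    rw [this, cat_cast (j + 1)]
    norm_num
end
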